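/- arXiv:2510.05298 — 2 statements merged into one kernel-verified Lean document; each statement's English description precedes it below -/
import Mathlib

section
/- (Distribution of the generalized growth chain.) For every n ≥ 0 and every k ∈ {0,1,...,n}, P(X_n^α = k) = (∏_{i=0}^{k-1} (1 − α(i))) · Σ ∏_{i=0}^{k} α(i)^{y_i}, where the sum ranges over all tuples (y_0, y_1, ..., y_k) of nonnegative integers with y_0 + y_1 + ... + y_k = n − k; and P(X_n^α = k) = 0 when k > n. -/
open MeasureTheory Filter Topology

/-- `X` is a Markov chain on `ℕ` with `X 0 = 0` and transition probabilities
`T(i, i) = α i` ("failure"), `T(i, i+1) = 1 - α i` ("success"), `T(i, j) = 0` otherwise,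
encoded by conditioning on every finite path. -/
def IsGrowthChain {Ω : Type*} [MeasurableSpace Ω] (P : Measure Ω)
    (X : ℕ → Ω → ℕ) (α : ℕ → ℝ) : Prop :=
  (∀ n, Measurable (X n)) ∧
  (∀ᵐ ω ∂P, X 0 ω = 0) ∧
  ∀ (n : ℕ) (f : ℕ → ℕ),
    P {ω | (∀ k ≤ n, X k ω = f k) ∧ X (n + 1) ω = f n + 1}
      = ENNReal.ofReal (1 - α (f n)) * P {ω | ∀ k ≤ n, X k ω = f k} ∧
    P {ω | (∀ k ≤ n, X k ω = f k) ∧ X (n + 1) ω = f n}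
      = ENNReal.ofReal (α (f n)) * P {ω | ∀ k ≤ n, X k ω = f k} ∧
    ∀ j : ℕ, j ≠ f n → j ≠ f n + 1 →
      P {ω | (∀ k ≤ n, X k ω = f k) ∧ X (n + 1) ω = j} = 0



noncomputable def gcT (α : ℕ → ℝ) (k m : ℕ) : ℝ :=
  ∑ y ∈ Finset.Nat.antidiagonalTuple (k+1) m, ∏ i : Fin (k+1), α i ^ y i

lemma gcT_zero_right (α : ℕ → ℝ) (k : ℕ) : gcT α k 0 = 1 := by
  simp [gcT, Finset.Nat.antidiagonalTuple_zero_right]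

lemma gcT_zero_left (α : ℕ → ℝ) (m : ℕ) : gcT α 0 m = α 0 ^ m := by
  simp [gcT, Finset.Nat.antidiagonalTuple_one]

lemma gcT_nonneg (α : ℕ → ℝ) (hα : ∀ i, 0 ≤ α i) (k m : ℕ) : 0 ≤ gcT α k m := by
  refine Finset.sum_nonneg fun y _ => Finset.prod_nonneg fun i _ => pow_nonneg (hα i) _

lemma gcT_succ (α : ℕ → ℝ) (k m : ℕ) :
    gcT α (k+1) (m+1) = α (k+1) * gcT α (k+1) m + gcT α k (m+1) := by
  classical
  have hupd : ∀ (y : Fin (k+2) → ℕ) (c : ℕ) (i : Fin (k+1)),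
      Function.update y (Fin.last (k+1)) c i.castSucc = y i.castSucc :=
    fun y c i => Function.update_of_ne (Fin.castSucc_lt_last i).ne _ _
  have hA : ∑ y ∈ (Finset.Nat.antidiagonalTuple (k+2) (m+1)).filter
        (fun y => y (Fin.last (k+1)) = 0), ∏ i : Fin (k+2), α i ^ y i
      = gcT α k (m+1) := by
    unfold gcT
    refine Finset.sum_nbij' (fun y => Fin.init y) (fun z => Fin.snoc z 0) ?_ ?_ ?_ ?_ ?_
    · intro y hy
      simp only [Finset.mem_filter, Finset.Nat.mem_antidiagonalTuple] at hy ⊢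
      obtain ⟨h1, h2⟩ := hy
      rw [Fin.sum_univ_castSucc] at h1
      simp only [Fin.init]
      omega
    · intro z hz
      simp only [Finset.mem_filter, Finset.Nat.mem_antidiagonalTuple] at hz ⊢
      constructor
      · rw [Fin.sum_univ_castSucc]
        simp [hz]
      · simp
    · intro y hy
      simp only [Finset.mem_filter] at hy
      show Fin.snoc (Fin.init y) 0 = y
      rw [← hy.2, Fin.snoc_init_self]
    · intro z hz
      simp [Fin.init_snoc]
    · intro y hy
      simp only [Finset.mem_filter] at hy
      rw [Fin.prod_univ_castSucc]
      simp [hy.2, Fin.init]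
  have hB : ∑ y ∈ (Finset.Nat.antidiagonalTuple (k+2) (m+1)).filter
        (fun y => ¬ y (Fin.last (k+1)) = 0), ∏ i : Fin (k+2), α i ^ y i
      = α (k+1) * gcT α (k+1) m := by
    unfold gcT
    rw [Finset.mul_sum]
    refine Finset.sum_nbij' (fun y => Function.update y (Fin.last (k+1)) (y (Fin.last (k+1)) - 1))
      (fun z => Function.update z (Fin.last (k+1)) (z (Fin.last (k+1)) + 1)) ?_ ?_ ?_ ?_ ?_
    · intro y hy
      simp only [Finset.mem_filter, Finset.Nat.mem_antidiagonalTuple] at hy ⊢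
      obtain ⟨h1, h2⟩ := hy
      rw [Fin.sum_univ_castSucc] at h1 ⊢
      rw [Function.update_self, Finset.sum_congr rfl (fun i _ => hupd y _ i)]
      omega
    · intro z hz
      simp only [Finset.mem_filter, Finset.Nat.mem_antidiagonalTuple] at hz ⊢
      rw [Fin.sum_univ_castSucc] at hz
      constructor
      · rw [Fin.sum_univ_castSucc, Function.update_self,
          Finset.sum_congr rfl (fun i _ => hupd z _ i)]
        omega
      · simp
    · intro y hy
      simp only [Finset.mem_filter, Finset.Nat.mem_antidiagonalTuple] at hy
      show Function.update _ _ _ = y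
      simp only [Function.update_self]
      rw [Nat.sub_add_cancel (Nat.one_le_iff_ne_zero.2 hy.2), Function.update_idem, Function.update_eq_self]
    · intro z hz
      show Function.update _ _ _ = z
      simp only [Function.update_self]
      rw [Nat.add_sub_cancel, Function.update_idem, Function.update_eq_self]
    · intro y hy
      simp only [Finset.mem_filter, Finset.Nat.mem_antidiagonalTuple] at hy
      have hprod : ∀ (w : Fin (k+2) → ℕ), (∏ i : Fin (k+2), α i ^ w i)
          = (∏ i : Fin (k+1), α i ^ w i.castSucc) * α (k+1) ^ w (Fin.last (k+1)) := by
        intro w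
        rw [Fin.prod_univ_castSucc]
        simp only [Fin.coe_castSucc, Fin.val_last]
      show _ = α (k+1) * ∏ i : Fin (k+2), α i ^ (Function.update y (Fin.last (k+1)) (y (Fin.last (k+1)) - 1)) i
      rw [hprod y, hprod, Function.update_self]
      have hc : (∏ i : Fin (k+1), α i ^ (Function.update y (Fin.last (k+1)) (y (Fin.last (k+1)) - 1)) i.castSucc)
          = ∏ i : Fin (k+1), α i ^ y i.castSucc := Finset.prod_congr rfl fun i _ => by rw [hupd]
      rw [hc]
      obtain ⟨b, hb⟩ : ∃ b, y (Fin.last (k+1)) = b + 1 :=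
        ⟨_, (Nat.succ_pred_eq_of_ne_zero hy.2).symm⟩
      rw [hb, Nat.add_sub_cancel, pow_succ]
      ring
  have htot := Finset.sum_filter_add_sum_filter_not (Finset.Nat.antidiagonalTuple (k+2) (m+1))
    (fun y => y (Fin.last (k+1)) = 0) (fun y => ∏ i : Fin (k+2), α i ^ y i)
  rw [hA, hB] at htot
  show (∑ y ∈ Finset.Nat.antidiagonalTuple (k+2) (m+1), ∏ i : Fin (k+2), α i ^ y i) = _
  rw [← htot]
  ring



def gcExt (n : ℕ) (v : Fin (n+1) → ℕ) : ℕ → ℕ := fun i => if h : i < n+1 then v ⟨i, h⟩ else 0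

lemma gcExt_le {n : ℕ} (v : Fin (n+1) → ℕ) {k : ℕ} (hk : k ≤ n) :
    gcExt n v k = v ⟨k, Nat.lt_succ_of_le hk⟩ := dif_pos _

lemma gcExt_last {n : ℕ} (v : Fin (n+1) → ℕ) : gcExt n v n = v (Fin.last n) :=
  gcExt_le v le_rfl

section
variable {Ω : Type*} [MeasurableSpace Ω] {P : Measure Ω} {X : ℕ → Ω → ℕ}

lemma gcE_meas (hm : ∀ n, Measurable (X n)) (n : ℕ) (f : ℕ → ℕ) :
    MeasurableSet {ω | ∀ k ≤ n, X k ω = f k} := by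
  have : {ω | ∀ k ≤ n, X k ω = f k} = ⋂ k ∈ Set.Iic n, (X k) ⁻¹' {f k} := by
    ext ω; simp [Set.mem_iInter]
  rw [this]
  exact MeasurableSet.biInter (Set.to_countable _)
    fun k _ => (hm k) (measurableSet_singleton _)

lemma gcE_disjoint (n : ℕ) {v w : Fin (n+1) → ℕ} (hvw : v ≠ w) :
    Disjoint {ω | ∀ k ≤ n, X k ω = gcExt n v k} {ω | ∀ k ≤ n, X k ω = gcExt n w k} := by
  rw [Set.disjoint_left]
  intro ω h1 h2
  apply hvw
  funext i
  have e1 := h1 i.1 (Nat.lt_succ_iff.1 i.2)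
  have e2 := h2 i.1 (Nat.lt_succ_iff.1 i.2)
  rw [gcExt_le v (Nat.lt_succ_iff.1 i.2)] at e1
  rw [gcExt_le w (Nat.lt_succ_iff.1 i.2)] at e2
  rw [show (⟨i.1, Nat.lt_succ_of_le (Nat.lt_succ_iff.1 i.2)⟩ : Fin (n+1)) = i from rfl] at e1 e2
  rw [← e1, ← e2]

lemma gc_decomp (hm : ∀ n, Measurable (X n)) (n j : ℕ) :
    P {ω | X n ω = j} = ∑' v : {v : Fin (n+1) → ℕ // v (Fin.last n) = j},
      P {ω | ∀ k ≤ n, X k ω = gcExt n v.1 k} := by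
  have hset : {ω | X n ω = j} = ⋃ v : {v : Fin (n+1) → ℕ // v (Fin.last n) = j},
      {ω | ∀ k ≤ n, X k ω = gcExt n v.1 k} := by
    ext ω
    simp only [Set.mem_iUnion, Set.mem_setOf_eq]
    constructor
    · intro h
      refine ⟨⟨fun i => X i ω, h⟩, fun k hk => ?_⟩
      rw [gcExt_le _ hk]
    · rintro ⟨⟨v, hv⟩, h⟩
      have := h n le_rfl
      rw [gcExt_last] at this
      rw [this]
      exact hv
  rw [hset, measure_iUnion]
  · intro v w hvw
    exact gcE_disjoint n (fun h => hvw (Subtype.ext h))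
  · exact fun v => gcE_meas hm n _

lemma gc_step_decomp (hm : ∀ n, Measurable (X n)) (n j : ℕ) :
    P {ω | X (n+1) ω = j} = ∑' v : Fin (n+1) → ℕ,
      P ({ω | ∀ k ≤ n, X k ω = gcExt n v k} ∩ {ω | X (n+1) ω = j}) := by
  have hset : {ω | X (n+1) ω = j} = ⋃ v : Fin (n+1) → ℕ,
      ({ω | ∀ k ≤ n, X k ω = gcExt n v k} ∩ {ω | X (n+1) ω = j}) := by
    ext ω
    simp only [Set.mem_iUnion, Set.mem_inter_iff, Set.mem_setOf_eq]
    constructor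
    · intro h
      exact ⟨fun i => X i ω, fun k hk => by rw [gcExt_le _ hk], h⟩
    · rintro ⟨v, _, h⟩
      exact h
  conv_lhs => rw [hset]
  rw [measure_iUnion]
  · intro v w hvw
    exact Disjoint.mono Set.inter_subset_left Set.inter_subset_left (gcE_disjoint n hvw)
  · exact fun v => (gcE_meas hm n _).inter ((hm (n+1)) (measurableSet_singleton _))

lemma gc_cond (hX : IsGrowthChain P X α) (n : ℕ) (v : Fin (n+1) → ℕ) (j : ℕ) :
    P ({ω | ∀ k ≤ n, X k ω = gcExt n v k} ∩ {ω | X (n+1) ω = j})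
      = if v (Fin.last n) = j then
          ENNReal.ofReal (α j) * P {ω | ∀ k ≤ n, X k ω = gcExt n v k}
        else if v (Fin.last n) + 1 = j then
          ENNReal.ofReal (1 - α (v (Fin.last n))) * P {ω | ∀ k ≤ n, X k ω = gcExt n v k}
        else 0 := by
  obtain ⟨hm, h0, hc⟩ := hX
  obtain ⟨hc1, hc2, hc3⟩ := hc n (gcExt n v)
  have hinter : ∀ j' : ℕ, {ω | (∀ k ≤ n, X k ω = gcExt n v k) ∧ X (n + 1) ω = j'}
      = {ω | ∀ k ≤ n, X k ω = gcExt n v k} ∩ {ω | X (n+1) ω = j'} := fun _ => rfl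
  by_cases h1 : v (Fin.last n) = j
  · rw [if_pos h1, ← h1, ← gcExt_last v, ← hinter, hc2]
  · rw [if_neg h1]
    by_cases h2 : v (Fin.last n) + 1 = j
    · rw [if_pos h2, ← h2, ← gcExt_last v, ← hinter, hc1, gcExt_last]
    · rw [if_neg h2, ← hinter]
      exact hc3 j (fun h => h1 (by rw [gcExt_last] at h; omega))
        (fun h => h2 (by rw [gcExt_last] at h; omega))

end
set_option linter.unusedSectionVars false

section
variable {Ω : Type*} [MeasurableSpace Ω] {P : MeasureTheory.Measure Ω} {X : ℕ → Ω → ℕ} {α : ℕ → ℝ}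

lemma gc_tsum_ite {β : Type*} (p : β → Prop) [DecidablePred p] (f : β → ENNReal) :
    ∑' b : {b // p b}, f b.1 = ∑' b, if p b then f b else 0 := by
  have h := tsum_subtype {b | p b} f
  refine Eq.trans ?_ (h.trans ?_)
  · rfl
  · exact tsum_congr fun b => by by_cases hb : p b <;> simp [Set.indicator_apply, hb]

lemma gc_step_zero (hX : IsGrowthChain P X α) (n : ℕ) :
    P {ω | X (n+1) ω = 0} = ENNReal.ofReal (α 0) * P {ω | X n ω = 0} := by
  classical
  rw [gc_step_decomp hX.1 n 0, gc_decomp hX.1 n 0, ← ENNReal.tsum_mul_left,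
    gc_tsum_ite (fun v : Fin (n+1) → ℕ => v (Fin.last n) = 0)
      (fun v => ENNReal.ofReal (α 0) * P {ω | ∀ k ≤ n, X k ω = gcExt n v k})]
  refine tsum_congr fun v => ?_
  rw [gc_cond hX n v 0]
  by_cases h : v (Fin.last n) = 0
  · rw [if_pos h, if_pos h]
  · rw [if_neg h, if_neg h, if_neg (Nat.succ_ne_zero _)]

lemma gc_step_succ (hX : IsGrowthChain P X α) (n j : ℕ) :
    P {ω | X (n+1) ω = j+1} = ENNReal.ofReal (α (j+1)) * P {ω | X n ω = j+1}
      + ENNReal.ofReal (1 - α j) * P {ω | X n ω = j} := by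
  classical
  rw [gc_step_decomp hX.1 n (j+1), gc_decomp hX.1 n (j+1), gc_decomp hX.1 n j,
    ← ENNReal.tsum_mul_left, ← ENNReal.tsum_mul_left,
    gc_tsum_ite (fun v : Fin (n+1) → ℕ => v (Fin.last n) = j+1)
      (fun v => ENNReal.ofReal (α (j+1)) * P {ω | ∀ k ≤ n, X k ω = gcExt n v k}),
    gc_tsum_ite (fun v : Fin (n+1) → ℕ => v (Fin.last n) = j)
      (fun v => ENNReal.ofReal (1 - α j) * P {ω | ∀ k ≤ n, X k ω = gcExt n v k}),
    ← ENNReal.tsum_add]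
  refine tsum_congr fun v => ?_
  rw [gc_cond hX n v (j+1)]
  by_cases h1 : v (Fin.last n) = j+1
  · have h2 : ¬ v (Fin.last n) = j := by omega
    rw [if_pos h1, if_pos h1, if_neg h2, add_zero]
  · rw [if_neg h1, if_neg h1, zero_add]
    by_cases h2 : v (Fin.last n) = j
    · rw [if_pos (by omega : v (Fin.last n) + 1 = j + 1), if_pos h2, h2]
    · rw [if_neg (by omega : ¬ v (Fin.last n) + 1 = j + 1), if_neg h2]

lemma gc_init0 (hX : IsGrowthChain P X α) [MeasureTheory.IsProbabilityMeasure P] :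
    P {ω | X 0 ω = 0} = 1 := by
  have h1 : P {ω | ¬ (X 0 ω = 0)} = 0 := MeasureTheory.ae_iff.mp hX.2.1
  have hms : MeasurableSet {ω | X 0 ω = 0} := (hX.1 0) (measurableSet_singleton 0)
  have h2 := MeasureTheory.measure_add_measure_compl (μ := P) hms
  rw [show {ω | X 0 ω = 0}ᶜ = {ω | ¬ (X 0 ω = 0)} from rfl, h1, add_zero] at h2
  simpa using h2

lemma gc_zero (hX : IsGrowthChain P X α) : ∀ n k : ℕ, n < k → P {ω | X n ω = k} = 0 := by
  intro n
  induction n with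
  | zero =>
    intro k hk
    have h1 : P {ω | ¬ (X 0 ω = 0)} = 0 := MeasureTheory.ae_iff.mp hX.2.1
    refine MeasureTheory.measure_mono_null (fun ω h => ?_) h1
    simp only [Set.mem_setOf_eq] at h ⊢
    omega
  | succ n ih =>
    intro k hk
    match k, hk with
    | (j+1), hk =>
      rw [gc_step_succ hX n j, ih (j+1) (by omega), ih j (by omega), mul_zero, mul_zero, add_zero]

lemma gc_formula [MeasureTheory.IsProbabilityMeasure P] (hX : IsGrowthChain P X α)
    (hα : ∀ i, 0 ≤ α i ∧ α i < 1) :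
    ∀ n k : ℕ, k ≤ n → P {ω | X n ω = k}
      = ENNReal.ofReal ((∏ i ∈ Finset.range k, (1 - α i)) * gcT α k (n - k)) := by
  have hC : ∀ k : ℕ, (0:ℝ) ≤ ∏ i ∈ Finset.range k, (1 - α i) :=
    fun k => Finset.prod_nonneg fun i _ => by linarith [(hα i).2]
  have hT := gcT_nonneg α (fun i => (hα i).1)
  intro n
  induction n with
  | zero =>
    intro k hk
    rw [Nat.le_zero] at hk
    subst hk
    rw [gc_init0 hX]
    simp [gcT_zero_right]
  | succ n ih =>
    intro k hk
    match k with
    | 0 =>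
      rw [gc_step_zero hX n, ih 0 (Nat.zero_le n), ← ENNReal.ofReal_mul (hα 0).1]
      congr 1
      simp only [Nat.sub_zero, gcT_zero_left, Finset.range_zero, Finset.prod_empty, one_mul]
      rw [pow_succ]
      ring
    | (j+1) =>
      rw [gc_step_succ hX n j]
      rcases Nat.lt_or_ge n (j+1) with hlt | hge
      · have hj : j = n := by omega
        subst hj
        rw [gc_zero hX j (j+1) (by omega), mul_zero, zero_add, ih j le_rfl]
        simp only [Nat.sub_self, gcT_zero_right, mul_one]
        rw [← ENNReal.ofReal_mul (by linarith [(hα j).2] : (0:ℝ) ≤ 1 - α j)]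
        congr 1
        rw [Finset.prod_range_succ]
        ring
      · rw [ih (j+1) hge, ih j (by omega),
          ← ENNReal.ofReal_mul (hα (j+1)).1,
          ← ENNReal.ofReal_mul (by linarith [(hα j).2] : (0:ℝ) ≤ 1 - α j),
          ← ENNReal.ofReal_add
            (mul_nonneg (hα (j+1)).1 (mul_nonneg (hC (j+1)) (hT (j+1) (n-(j+1)))))
            (mul_nonneg (by linarith [(hα j).2]) (mul_nonneg (hC j) (hT j (n-j))))]
        congr 1
        have hm1 : n - j = (n - (j+1)) + 1 := by omega
        simp only [Nat.succ_sub_succ]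
        rw [hm1, gcT_succ, Finset.prod_range_succ]
        ring

end

/-- Distribution of the generalized growth chain. -/
theorem stmt6 {Ω : Type*} [MeasurableSpace Ω] (P : Measure Ω) [IsProbabilityMeasure P]
    (α : ℕ → ℝ) (X : ℕ → Ω → ℕ) (hα : ∀ i, 0 ≤ α i ∧ α i < 1)
    (hX : IsGrowthChain P X α) (n k : ℕ) :
    (k ≤ n →
        P {ω | X n ω = k}
          = ENNReal.ofReal ((∏ i ∈ Finset.range k, (1 - α i)) *
              ∑' y : {y : Fin (k + 1) → ℕ // (∑ i, y i) + k = n},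
                ∏ i : Fin (k + 1), (α i) ^ (y.1 i))) ∧
      (n < k → P {ω | X n ω = k} = 0) := by
  refine ⟨fun hkn => ?_, fun hnk => gc_zero hX n k hnk⟩
  have ht : (∑' y : {y : Fin (k + 1) → ℕ // (∑ i, y i) + k = n},
      ∏ i : Fin (k + 1), (α i) ^ (y.1 i)) = gcT α k (n - k) := by
    let e : {y : Fin (k+1) → ℕ // (∑ i, y i) + k = n}
        ≃ {y : Fin (k+1) → ℕ // y ∈ Finset.Nat.antidiagonalTuple (k+1) (n-k)} :=
      Equiv.subtypeEquivRight (fun y => by rw [Finset.Nat.mem_antidiagonalTuple]; omega)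
    unfold gcT
    rw [← Finset.tsum_subtype (Finset.Nat.antidiagonalTuple (k+1) (n-k))
      (fun y => ∏ i : Fin (k+1), α i ^ y i)]
    refine Eq.trans ?_ (e.tsum_eq fun y => ∏ i : Fin (k+1), α i ^ y.1 i)
    exact tsum_congr fun y => rfl
  rw [ht]
  exact gc_formula hX hα n k hkn
end

section
/- (General almost-sure convergence of X_n^α − n.) Define h̃(x) := Σ_{i=0}^{x-1} α(i)/(1 − α(i)). Suppose that sup_n Σ_{i=0}^{n-1} E[α(X_i^α)/(1 − α(X_i^α))] < ∞ and that h̃(X_n^α) converges almost surely as n → ∞. Then there exists a real-valued random variable Y such that X_n^α − n → Y almost surely as n → ∞. -/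
open MeasureTheory Filter Topology

section Aux
variable {Ω : Type*} [MeasurableSpace Ω] {P : Measure Ω} {X : ℕ → Ω → ℕ} {α : ℕ → ℝ}


lemma mcyl (h : ∀ n, Measurable (X n)) (n : ℕ) (f : ℕ → ℕ) :
    MeasurableSet {ω | ∀ k ≤ n, X k ω = f k} := by
  have : {ω | ∀ k ≤ n, X k ω = f k} = ⋂ k ∈ {k | k ≤ n}, X k ⁻¹' {f k} := by
    ext ω; simp [Set.mem_iInter]
  rw [this]
  exact MeasurableSet.biInter (Set.to_countable _) fun k _ => (h k) (measurableSet_singleton _)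

lemma cover (n : ℕ) (ω : Ω) :
    ∃ l : List ℕ, l.length = n + 1 ∧ ∀ k ≤ n, X k ω = l.getD k 0 := by
  refine ⟨(List.range (n+1)).map fun k => X k ω, by simp, fun k hk => ?_⟩
  have hk' : k < n + 1 := Nat.lt_succ_of_le hk
  rw [List.getD_eq_getElem _ _ (by simpa using hk')]
  simp

lemma list_eq_of_getD (n : ℕ) {l l' : List ℕ} (h : l.length = n + 1) (h' : l'.length = n + 1)
    (hval : ∀ k ≤ n, l.getD k 0 = l'.getD k 0) : l = l' := by
  apply List.ext_getElem (by omega)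
  intro k hk _
  have hk2 : k ≤ n := by omega
  have := hval k hk2
  rw [List.getD_eq_getElem l _ (by omega), List.getD_eq_getElem l' _ (by rw [h']; omega)] at this
  exact this


lemma badstep_null (hX : IsGrowthChain P X α) (n : ℕ) :
    P {ω | X (n+1) ω ≠ X n ω ∧ X (n+1) ω ≠ X n ω + 1} = 0 := by
  set T : List ℕ × ℕ → Set Ω := fun p =>
    {ω | ((∀ k ≤ n, X k ω = p.1.getD k 0) ∧ X (n+1) ω = p.2) ∧
      p.2 ≠ p.1.getD n 0 ∧ p.2 ≠ p.1.getD n 0 + 1} with hT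
  have hsub : {ω | X (n+1) ω ≠ X n ω ∧ X (n+1) ω ≠ X n ω + 1} ⊆ ⋃ p, T p := by
    intro ω hω
    obtain ⟨l, hl, hval⟩ := cover (X := X) n ω
    refine Set.mem_iUnion.2 ⟨(l, X (n+1) ω), ?_⟩
    have hn : l.getD n 0 = X n ω := (hval n le_rfl).symm
    exact ⟨⟨fun k hk => hval k hk, rfl⟩, by rw [hn]; exact hω.1, by rw [hn]; exact hω.2⟩
  refine measure_mono_null hsub (measure_iUnion_null fun p => ?_)
  by_cases h1 : p.2 ≠ p.1.getD n 0 ∧ p.2 ≠ p.1.getD n 0 + 1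
  · have := (hX.2.2 n (fun k => p.1.getD k 0)).2.2 p.2 h1.1 h1.2
    have heq : T p = {ω | (∀ k ≤ n, X k ω = p.1.getD k 0) ∧ X (n+1) ω = p.2} := by
      ext ω; simp only [hT, Set.mem_setOf_eq]; tauto
    rw [heq]; exact this
  · have heq : T p = ∅ := by
      ext ω; simp only [hT, Set.mem_setOf_eq, Set.mem_empty_iff_false, iff_false]
      tauto
    rw [heq]; exact measure_empty

lemma stay_prob (hX : IsGrowthChain P X α) (n k : ℕ) (f : ℕ → ℕ)
    (hf : ∀ j, n ≤ j → j ≤ n + k → f j = f n) :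
    P {ω | ∀ m ≤ n + k, X m ω = f m}
      = ENNReal.ofReal (α (f n)) ^ k * P {ω | ∀ m ≤ n, X m ω = f m} := by
  induction k with
  | zero => simp
  | succ k ih =>
    have h1 : {ω | ∀ m ≤ n + (k+1), X m ω = f m}
        = {ω | (∀ m ≤ n + k, X m ω = f m) ∧ X (n + k + 1) ω = f (n+k)} := by
      ext ω
      constructor
      · intro h
        refine ⟨fun m hm => h m (by omega), ?_⟩
        have h4 := h (n+k+1) (by omega)
        rw [hf (n+k+1) (by omega) (by omega), ← hf (n+k) (by omega) (by omega)] at h4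
        exact h4
      · rintro ⟨h, h2⟩ m hm
        rcases Nat.lt_or_ge m (n+k+1) with h3 | h3
        · exact h m (by omega)
        · have hm' : m = n + k + 1 := by omega
          rw [hm', h2, hf (n+k) (by omega) (by omega), hf (n+k+1) (by omega) (by omega)]
    have h2 := (hX.2.2 (n+k) f).2.1
    rw [h1, h2, ih (fun j hj hj' => hf j hj (by omega)), hf (n+k) (by omega) (by omega),
      pow_succ]
    ring


lemma mono_steps {ω : Ω} (h : ∀ m, X (m+1) ω = X m ω ∨ X (m+1) ω = X m ω + 1) :
    Monotone fun n => X n ω :=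
  monotone_nat_of_le_succ fun m => by rcases h m with h' | h' <;> omega

lemma stuck_null (hX : IsGrowthChain P X α) [IsProbabilityMeasure P]
    (hα : ∀ i, 0 ≤ α i ∧ α i < 1) (n i : ℕ) :
    P {ω | ∀ m, n ≤ m → X m ω = i} = 0 := by
  classical
  set x := ENNReal.ofReal (α i) with hxdef
  have hx : x < 1 := by
    rw [hxdef]
    exact ENNReal.ofReal_lt_one.2 (hα i).2
  have key : ∀ k, P {ω | ∀ m, n ≤ m → X m ω = i} ≤ x ^ k := by
    intro k
    set g : List ℕ → ℕ → ℕ := fun l m => if m ≤ n then l.getD m 0 else l.getD n 0 with hg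
    set C : List ℕ → Set Ω := fun l =>
      if l.length = n + 1 ∧ l.getD n 0 = i then {ω | ∀ m ≤ n, X m ω = g l m} else ∅ with hC
    set D : List ℕ → Set Ω := fun l =>
      if l.length = n + 1 ∧ l.getD n 0 = i then {ω | ∀ m ≤ n + k, X m ω = g l m} else ∅ with hD
    have hgn : ∀ l, g l n = l.getD n 0 := fun l => by simp [hg]
    have hDP : ∀ l, P (D l) = x ^ k * P (C l) := by
      intro l
      by_cases h : l.length = n + 1 ∧ l.getD n 0 = i
      · rw [hD, hC]; simp only [if_pos h]
        have hf : ∀ j, n ≤ j → j ≤ n + k → g l j = g l n := by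
          intro j hj hj'
          rcases Nat.eq_or_lt_of_le hj with h' | h'
          · rw [← h']
          · simp only [hg]
            rw [if_neg (by omega), if_pos le_rfl]
        have := stay_prob hX n k (g l) hf
        rw [this, hgn, h.2]
      · simp only [hD, hC]
        rw [if_neg h, if_neg h]
        simp
    have hsub : {ω | ∀ m, n ≤ m → X m ω = i} ⊆ ⋃ l, D l := by
      intro ω hω
      obtain ⟨l, hl, hval⟩ := cover (X := X) n ω
      have hcond : l.length = n + 1 ∧ l.getD n 0 = i :=
        ⟨hl, by rw [← hval n le_rfl]; exact hω n le_rfl⟩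
      refine Set.mem_iUnion.2 ⟨l, ?_⟩
      rw [hD]; simp only [if_pos hcond]
      intro m hm
      by_cases hmn : m ≤ n
      · simp only [hg, if_pos hmn]; exact hval m hmn
      · simp only [hg, if_neg hmn]
        rw [hcond.2]; exact hω m (by omega)
    have hCm : ∀ l, MeasurableSet (C l) := by
      intro l
      simp only [hC]
      split
      · exact mcyl hX.1 n (g l)
      · exact MeasurableSet.empty
    have hCd : Pairwise (Function.onFun Disjoint C) := by
      intro l l' hne
      simp only [Function.onFun, hC]
      split
      case isFalse => simp
      case isTrue h =>
        split
        case isFalse => simp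
        case isTrue h' =>
          refine Set.disjoint_left.2 fun ω h1 h2 => hne ?_
          refine list_eq_of_getD n h.1 h'.1 fun m hm => ?_
          have e1 := h1 m hm
          have e2 := h2 m hm
          simp only [hg, if_pos hm] at e1 e2
          rw [← e1, ← e2]
    calc P {ω | ∀ m, n ≤ m → X m ω = i} ≤ P (⋃ l, D l) := measure_mono hsub
      _ ≤ ∑' l, P (D l) := measure_iUnion_le _
      _ = ∑' l, x ^ k * P (C l) := by simp only [hDP]
      _ = x ^ k * ∑' l, P (C l) := ENNReal.tsum_mul_left
      _ = x ^ k * P (⋃ l, C l) := by rw [measure_iUnion hCd hCm]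
      _ ≤ x ^ k * 1 := mul_le_mul_right prob_le_one _
      _ = x ^ k := mul_one _
  have ht := ENNReal.tendsto_pow_atTop_nhds_zero_of_lt_one hx
  exact le_antisymm (ge_of_tendsto' ht key) zero_le

lemma fail_bound (hX : IsGrowthChain P X α) [IsProbabilityMeasure P] (i : ℕ) :
    P ({ω | ∃ m, X m ω = i ∧ X (m+1) ω = i} ∩
       {ω | ∀ m, X (m+1) ω = X m ω ∨ X (m+1) ω = X m ω + 1}) ≤ ENNReal.ofReal (α i) := by
  classical
  set adm : ℕ × List ℕ → Prop := fun p =>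
    p.2.length = p.1 + 1 ∧ p.2.getD p.1 0 = i ∧ ∀ j < p.1, p.2.getD j 0 ≠ i with hadm
  set C : ℕ × List ℕ → Set Ω := fun p =>
    if adm p then {ω | ∀ k ≤ p.1, X k ω = p.2.getD k 0} else ∅ with hC
  set E : ℕ × List ℕ → Set Ω := fun p =>
    if adm p then {ω | (∀ k ≤ p.1, X k ω = p.2.getD k 0) ∧ X (p.1+1) ω = p.2.getD p.1 0}
    else ∅ with hE
  have hEP : ∀ p, P (E p) = ENNReal.ofReal (α i) * P (C p) := by
    intro p
    by_cases h : adm p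
    · simp only [hE, hC]
      rw [if_pos h, if_pos h]
      have h2 := (hX.2.2 p.1 (fun k => p.2.getD k 0)).2.1
      rw [h2, h.2.1]
    · simp only [hE, hC]
      rw [if_neg h, if_neg h]
      simp
  have hsub : {ω | ∃ m, X m ω = i ∧ X (m+1) ω = i} ∩
      {ω | ∀ m, X (m+1) ω = X m ω ∨ X (m+1) ω = X m ω + 1} ⊆ ⋃ p, E p := by
    rintro ω ⟨⟨m, hm1, hm2⟩, hsteps⟩
    have hmono := mono_steps (X := X) hsteps
    have hex : ∃ a, X a ω = i := ⟨m, hm1⟩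
    set a := Nat.find hex with ha
    have haspec : X a ω = i := Nat.find_spec hex
    have ham : a ≤ m := Nat.find_min' hex hm1
    obtain ⟨l, hl, hval⟩ := cover (X := X) a ω
    have hcond : adm (a, l) := by
      refine ⟨hl, by rw [← hval a le_rfl]; exact haspec, fun j hj => ?_⟩
      rw [← hval j (le_of_lt hj)]
      exact Nat.find_min hex hj
    refine Set.mem_iUnion.2 ⟨(a, l), ?_⟩
    simp only [hE]
    rw [if_pos hcond]
    refine ⟨fun k hk => hval k hk, ?_⟩
    have h1 : X a ω ≤ X (a+1) ω := hmono (Nat.le_succ a)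
    have h2 : X (a+1) ω ≤ X (m+1) ω := hmono (by omega)
    rw [← hval a le_rfl]
    omega
  have hCm : ∀ p, MeasurableSet (C p) := by
    intro p
    simp only [hC]
    split
    · exact mcyl hX.1 p.1 _
    · exact MeasurableSet.empty
  have hCd : Pairwise (Function.onFun Disjoint C) := by
    rintro ⟨n, l⟩ ⟨n', l'⟩ hne
    simp only [Function.onFun, hC]
    split
    case isFalse => simp
    case isTrue h =>
      split
      case isFalse => simp
      case isTrue h' =>
        refine Set.disjoint_left.2 fun ω h1 h2 => ?_
        rcases lt_trichotomy n n' with hlt | heq | hlt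
        · exact h'.2.2 n hlt (by rw [← h2 n (le_of_lt hlt), h1 n le_rfl]; exact h.2.1)
        · subst heq
          refine hne ?_
          have : l = l' := by
            refine list_eq_of_getD n h.1 h'.1 fun k hk => ?_
            rw [← h1 k hk, ← h2 k hk]
          rw [this]
        · exact h.2.2 n' hlt (by rw [← h1 n' (le_of_lt hlt), h2 n' le_rfl]; exact h'.2.1)
  calc P ({ω | ∃ m, X m ω = i ∧ X (m+1) ω = i} ∩
        {ω | ∀ m, X (m+1) ω = X m ω ∨ X (m+1) ω = X m ω + 1})
      ≤ P (⋃ p, E p) := measure_mono hsub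
    _ ≤ ∑' p, P (E p) := measure_iUnion_le _
    _ = ∑' p, ENNReal.ofReal (α i) * P (C p) := by simp only [hEP]
    _ = ENNReal.ofReal (α i) * ∑' p, P (C p) := ENNReal.tsum_mul_left
    _ = ENNReal.ofReal (α i) * P (⋃ p, C p) := by rw [measure_iUnion hCd hCm]
    _ ≤ ENNReal.ofReal (α i) * 1 := mul_le_mul_right prob_le_one _
    _ = ENNReal.ofReal (α i) := mul_one _

end Aux

/-- General almost-sure convergence of `X n - n`. -/
theorem stmt13 {Ω : Type*} [MeasurableSpace Ω] (P : Measure Ω) [IsProbabilityMeasure P]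
    (α : ℕ → ℝ) (X : ℕ → Ω → ℕ) (hα : ∀ i, 0 ≤ α i ∧ α i < 1)
    (hX : IsGrowthChain P X α)
    (hbound : ∃ M : ℝ, ∀ n : ℕ,
      ∑ i ∈ Finset.range n, ∫ ω, α (X i ω) / (1 - α (X i ω)) ∂P ≤ M)
    (hconv : ∀ᵐ ω ∂P, ∃ c : ℝ,
      Tendsto (fun n : ℕ => ∑ i ∈ Finset.range (X n ω), α i / (1 - α i)) atTop (𝓝 c)) :
    ∃ Y : Ω → ℝ, Measurable Y ∧
      ∀ᵐ ω ∂P, Tendsto (fun n : ℕ => (X n ω : ℝ) - n) atTop (𝓝 (Y ω)) := by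
  classical
  -- a.e. valid steps
  have hM : ∀ᵐ ω ∂P, ∀ m, X (m+1) ω = X m ω ∨ X (m+1) ω = X m ω + 1 := by
    rw [ae_all_iff]
    intro m
    rw [ae_iff]
    have : {ω | ¬(X (m+1) ω = X m ω ∨ X (m+1) ω = X m ω + 1)}
        = {ω | X (m+1) ω ≠ X m ω ∧ X (m+1) ω ≠ X m ω + 1} := by
      ext ω; simp [not_or]
    rw [this]
    exact badstep_null hX m
  -- a.e. not stuck
  have hS : ∀ᵐ ω ∂P, ∀ n i, ¬ (∀ m, n ≤ m → X m ω = i) := by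
    rw [ae_all_iff]
    intro n
    rw [ae_all_iff]
    intro i
    rw [ae_iff]
    have : {ω | ¬¬∀ m, n ≤ m → X m ω = i} = {ω | ∀ m, n ≤ m → X m ω = i} := by
      ext ω; simp
    rw [this]
    exact stuck_null hX hα n i
  -- monotone + unbounded on good set
  have htop : ∀ ω : Ω, (∀ m, X (m+1) ω = X m ω ∨ X (m+1) ω = X m ω + 1) →
      (∀ n i, ¬ (∀ m, n ≤ m → X m ω = i)) → Tendsto (fun n => X n ω) atTop atTop := by
    intro ω hsteps hns
    have hmono := mono_steps (X := X) hsteps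
    refine tendsto_atTop_atTop_of_monotone hmono ?_
    intro b
    induction b with
    | zero => exact ⟨0, Nat.zero_le _⟩
    | succ b ih =>
      obtain ⟨n, hn⟩ := ih
      have h2 := hns n (X n ω)
      push_neg at h2
      obtain ⟨m, hm, hne⟩ := h2
      have : X n ω ≤ X m ω := hmono hm
      exact ⟨m, by omega⟩
  -- X n ≤ X 0 + n
  have hub : ∀ ω : Ω, (∀ m, X (m+1) ω = X m ω ∨ X (m+1) ω = X m ω + 1) →
      ∀ n, X n ω ≤ X 0 ω + n := by
    intro ω hsteps n
    induction n with
    | zero => omega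
    | succ n ih => rcases hsteps n with h | h <;> omega
  -- summability of the series
  have hsum : Summable (fun i => α i / (1 - α i)) := by
    have hne : (ae P).NeBot := ae_neBot.2 (IsProbabilityMeasure.ne_zero P)
    obtain ⟨ω, hsteps, hns, h0, c, hc⟩ := (hM.and (hS.and (hX.2.1.and hconv))).exists
    have hmono := mono_steps (X := X) hsteps
    have ht := htop ω hsteps hns
    -- X hits every natural number
    have hits : ∀ m : ℕ, ∃ n, X n ω = m := by
      intro m
      have hex : ∃ n, m ≤ X n ω := (ht.eventually_ge_atTop m).exists
      set n := Nat.find hex with hn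
      have hspec : m ≤ X n ω := Nat.find_spec hex
      refine ⟨n, ?_⟩
      rcases Nat.eq_zero_or_pos n with h | h
      · rw [h] at hspec ⊢
        rw [h0] at hspec ⊢
        omega
      · have hlt : X (n-1) ω < m := by
          by_contra hge
          exact Nat.find_min hex (m := n - 1) (by omega) (by omega)
        have := hsteps (n-1)
        have hn1 : n - 1 + 1 = n := by omega
        rw [hn1] at this
        omega
    choose nm hnm using hits
    have hnmtop : Tendsto nm atTop atTop := by
      refine tendsto_atTop_mono (fun m => ?_) tendsto_id
      have h1 := hub ω hsteps (nm m)
      rw [hnm m, h0] at h1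
      simpa using h1
    have hScomp : Tendsto (fun m => ∑ i ∈ Finset.range (X (nm m) ω), α i / (1 - α i))
        atTop (𝓝 c) := hc.comp hnmtop
    have hS2 : Tendsto (fun m => ∑ i ∈ Finset.range m, α i / (1 - α i)) atTop (𝓝 c) := by
      refine hScomp.congr fun m => by rw [hnm m]
    have hnn : ∀ i, 0 ≤ α i / (1 - α i) := by
      intro i
      have h1 : 0 < 1 - α i := by linarith [(hα i).2]
      exact div_nonneg (hα i).1 h1.le
    have hmonoS : Monotone (fun m => ∑ i ∈ Finset.range m, α i / (1 - α i)) := by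
      intro p q hpq
      exact Finset.sum_le_sum_of_subset_of_nonneg (Finset.range_subset_range.2 hpq)
        (fun i _ _ => hnn i)
    exact summable_of_sum_range_le hnn (hmonoS.ge_of_tendsto hS2)
  have hsumα : Summable α := by
    refine Summable.of_nonneg_of_le (fun i => (hα i).1) (fun i => ?_) hsum
    have h1 : 0 < 1 - α i := by linarith [(hα i).2]
    rw [le_div_iff₀ h1]
    nlinarith [(hα i).1, (hα i).2]
  -- Borel-Cantelli
  set Mset : Set Ω := {ω | ∀ m, X (m+1) ω = X m ω ∨ X (m+1) ω = X m ω + 1} with hMset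
  set s : ℕ → Set Ω := fun i => {ω | ∃ m, X m ω = i ∧ X (m+1) ω = i} ∩ Mset with hs
  have hBC : P (limsup s atTop) = 0 := by
    refine measure_limsup_atTop_eq_zero ?_
    have h1 : ∑' i, P (s i) ≤ ∑' i, ENNReal.ofReal (α i) :=
      ENNReal.tsum_le_tsum fun i => fail_bound hX i
    have h2 : ∑' i, ENNReal.ofReal (α i) = ENNReal.ofReal (∑' i, α i) :=
      (ENNReal.ofReal_tsum_of_nonneg (fun i => (hα i).1) hsumα).symm
    exact ne_top_of_le_ne_top (by rw [h2]; exact ENNReal.ofReal_ne_top) h1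
  have hBC' : ∀ᵐ ω ∂P, ω ∉ limsup s atTop := measure_eq_zero_iff_ae_notMem.1 hBC
  -- a.e. existence of the limit
  have hae : ∀ᵐ ω ∂P, ∃ L : ℝ, Tendsto (fun n : ℕ => (X n ω : ℝ) - n) atTop (𝓝 L) := by
    filter_upwards [hM, hS, hBC'] with ω hsteps hns hlim
    have hmono := mono_steps (X := X) hsteps
    have ht := htop ω hsteps hns
    rw [Filter.mem_limsup_iff_frequently_mem, not_frequently] at hlim
    have hωM : ω ∈ Mset := hsteps
    obtain ⟨I, hI⟩ := hlim.exists_forall_of_atTop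
    -- beyond some time, no failures
    have hT : ∃ T, ∀ j, T ≤ j → X (j+1) ω = X j ω + 1 := by
      obtain ⟨T, hT⟩ := (ht.eventually_ge_atTop (I+1)).exists
      refine ⟨T, fun j hj => ?_⟩
      rcases hsteps j with h | h
      · exfalso
        have hiI : I ≤ X j ω := le_trans (by omega) (hT.trans (hmono hj))
        exact (hI (X j ω) hiI) ⟨⟨j, rfl, h⟩, hωM⟩
      · exact h
    obtain ⟨T, hTp⟩ := hT
    have hconst : ∀ n, T ≤ n → (X n ω : ℝ) - n = (X T ω : ℝ) - T := by
      intro n hn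
      induction n with
      | zero =>
        have : T = 0 := by omega
        rw [this]
      | succ n ih =>
        rcases Nat.lt_or_ge T (n+1) with h | h
        · have hTn : T ≤ n := by omega
          have := hTp n hTn
          rw [this]
          push_cast
          rw [← ih hTn]
          push_cast
          ring
        · have : T = n + 1 := by omega
          rw [this]
    refine ⟨(X T ω : ℝ) - T, ?_⟩
    refine Tendsto.congr' ?_ tendsto_const_nhds
    filter_upwards [eventually_ge_atTop T] with n hn
    exact (hconst n hn).symm
  obtain ⟨Y, hYmeas, hY⟩ := measurable_limit_of_tendsto_metrizable_ae
    (μ := P) (f := fun n ω => (X n ω : ℝ) - n)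
    (fun n => ((measurable_from_nat.comp (hX.1 n)).sub measurable_const).aemeasurable) hae
  exact ⟨Y, hYmeas, hY⟩
end
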